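/- arXiv:2202.05229 — 10 statements merged into one kernel-verified Lean document; each statement's English description precedes it below -/
import Mathlib

section
/- There exists an Ellentuck basic set N_f all of whose elements code transitive binary relations; consequently, the set of codes of transitive binary relations is not ε-small. -/
open Set

/-- The Cantor space `2^ℕ`. -/
abbrev Cantor : Type := ℕ → Bool

/-- The basic set determined by a partial function `f : ℕ → Bool`
(modeled as `ℕ → Option Bool`): all `x` agreeing with `f` on its domain. -/
def Nf (f : ℕ → Option Bool) : Set Cantor := {x | ∀ n b, f n = some b → x n = b}

/-- The domain of a partial function. -/
def domPF (f : ℕ → Option Bool) : Set ℕ := {n | f n ≠ none}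

/-- Cantor collection: basic sets with finite domain. -/
def isCantorFn (f : ℕ → Option Bool) : Prop := (domPF f).Finite

/-- Doughnut collection: domain and co-domain infinite. -/
def isDoughnutFn (f : ℕ → Option Bool) : Prop :=
  (domPF f).Infinite ∧ ((domPF f)ᶜ : Set ℕ).Infinite

/-- Ellentuck collection: domain and co-domain infinite, and the value is
`false` for all sufficiently large members of the domain. -/
def isEllentuckFn (f : ℕ → Option Bool) : Prop :=
  isDoughnutFn f ∧ ∃ k : ℕ, ∀ n ≥ k, n ∈ domPF f → f n = some false

/-- `S` is small with respect to the Cantor collection. -/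
def gammaSmall (S : Set Cantor) : Prop :=
  ∀ f, isCantorFn f → ∃ g, isCantorFn g ∧ Nf g ⊆ Nf f ∧ Nf g ∩ S = ∅

/-- `S` is small with respect to the Ellentuck collection (Ramsey null). -/
def epsSmall (S : Set Cantor) : Prop :=
  ∀ f, isEllentuckFn f → ∃ g, isEllentuckFn g ∧ Nf g ⊆ Nf f ∧ Nf g ∩ S = ∅

/-- `S` is small with respect to the doughnut collection (doughnut null). -/
def deltaSmall (S : Set Cantor) : Prop :=
  ∀ f, isDoughnutFn f → ∃ g, isDoughnutFn g ∧ Nf g ⊆ Nf f ∧ Nf g ∩ S = ∅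

/-- The binary relation on `X` coded by `z ∈ 2^ℕ` via an enumeration `q` of `X × X`. -/
def RelC {X : Type*} (q : ℕ ≃ X × X) (z : Cantor) (s t : X) : Prop :=
  z (q.symm (s, t)) = true

/-- Some Ellentuck basic set consists of codes of transitive relations;
hence the set of codes of transitive relations is not ε-small. -/
theorem transitive_not_epsSmall (q : ℕ ≃ ℕ × ℕ) :
    (∃ f, isEllentuckFn f ∧
      Nf f ⊆ {z | ∀ a b c : ℕ, RelC q z a b → RelC q z b c → RelC q z a c}) ∧
    ¬ epsSmall {z | ∀ a b c : ℕ, RelC q z a b → RelC q z b c → RelC q z a c} := by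
  set S := {z | ∀ a b c : ℕ, RelC q z a b → RelC q z b c → RelC q z a c} with hS
  set f : ℕ → Option Bool := fun n => if (q n).1 = (q n).2 then none else some false with hf
  have hdom : domPF f = {n | (q n).1 ≠ (q n).2} := by
    ext n
    simp only [domPF, hf, Set.mem_setOf_eq]
    constructor
    · intro h
      by_contra hc
      exact h (by simp [hc])
    · intro h hc
      rw [if_neg h] at hc
      simp at hc
  have hEll : isEllentuckFn f := by
    refine ⟨⟨?_, ?_⟩, 0, fun n _ hn => ?_⟩
    · rw [hdom]
      apply Set.infinite_of_injective_forall_mem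
        (f := fun k : ℕ => q.symm (0, k + 1)) ?_ ?_
      · intro a b hab
        have := congrArg q hab
        simp at this
        omega
      · intro k; simp
    · rw [hdom]
      have : ({n | (q n).1 ≠ (q n).2}ᶜ : Set ℕ) = {n | (q n).1 = (q n).2} := by
        ext n; simp
      rw [this]
      apply Set.infinite_of_injective_forall_mem
        (f := fun k : ℕ => q.symm (k, k)) ?_ ?_
      · intro a b hab
        have := congrArg q hab
        simp at this
        exact this
      · intro k; simp
    · rw [hdom] at hn
      simp only [hf]
      rw [if_neg hn]
  have hsub : Nf f ⊆ S := by
    intro z hz a b c hab hbc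
    by_cases h : a = b
    · subst h; exact hbc
    · exfalso
      have : f (q.symm (a, b)) = some false := by
        simp only [hf]
        rw [if_neg]
        simp [h]
      have := hz _ _ this
      simp [RelC, this] at hab
  refine ⟨⟨f, hEll, hsub⟩, ?_⟩
  intro hsmall
  obtain ⟨g, hgE, hgf, hgS⟩ := hsmall f hEll
  set x : Cantor := fun n => (g n).getD false with hx
  have hxg : x ∈ Nf g := by
    intro n b hb
    simp [hx, hb]
  have : x ∈ Nf g ∩ S := ⟨hxg, hsub (hgf hxg)⟩
  rw [hgS] at this
  exact this
end

section
/- There exists an Ellentuck basic set N_g all of whose elements code asymmetric binary relations; consequently, the set of codes of asymmetric binary relations is not ε-small. -/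
open Set

/-- Some Ellentuck basic set consists of codes of asymmetric relations;
hence the set of codes of asymmetric relations is not ε-small. -/
theorem asymmetric_not_epsSmall (q : ℕ ≃ ℕ × ℕ) :
    (∃ g, isEllentuckFn g ∧
      Nf g ⊆ {z | ∀ a b : ℕ, RelC q z a b → ¬ RelC q z b a}) ∧
    ¬ epsSmall {z | ∀ a b : ℕ, RelC q z a b → ¬ RelC q z b a} := by
  set S := {z | ∀ a b : ℕ, RelC q z a b → ¬ RelC q z b a}
  set g : ℕ → Option Bool := fun n => if (q n).2 ≤ (q n).1 then some false else none with hg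
  have hdom : domPF g = {n | (q n).2 ≤ (q n).1} := by
    ext n; simp only [domPF, hg, mem_setOf_eq]
    split <;> simp_all
  have hEll : isEllentuckFn g := by
    refine ⟨⟨?_, ?_⟩, 0, fun n _ hn => ?_⟩
    · rw [hdom]
      apply Set.infinite_of_injective_forall_mem (f := fun k => q.symm (k, 0))
      · intro a b h
        have := congrArg q h; simp at this; exact this
      · intro k; simp [mem_setOf_eq]
    · rw [hdom]
      apply Set.infinite_of_injective_forall_mem (f := fun k => q.symm (0, k + 1))
      · intro a b h
        have := congrArg q h; simp at this; exact this
      · intro k; simp [mem_setOf_eq]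
    · rw [hdom] at hn
      simp only [mem_setOf_eq] at hn
      simp only [hg]; rw [if_pos hn]
  have hsub : Nf g ⊆ S := by
    intro z hz a b hab hba
    rcases le_total b a with h | h
    · have : g (q.symm (a, b)) = some false := by
        simp only [hg]; rw [if_pos]; simp [h]
      have := hz _ _ this
      simp [RelC, this] at hab
    · have : g (q.symm (b, a)) = some false := by
        simp only [hg]; rw [if_pos]; simp [h]
      have := hz _ _ this
      simp [RelC, this] at hba
  refine ⟨⟨g, hEll, hsub⟩, fun hsm => ?_⟩
  obtain ⟨g', hg', hsub', hdisj⟩ := hsm g hEll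
  have hx : (fun n => (g' n).getD false) ∈ Nf g' := by
    intro n b hb; simp [hb]
  have : (fun n => (g' n).getD false) ∈ Nf g' ∩ S := ⟨hx, hsub (hsub' hx)⟩
  rw [hdisj] at this
  exact this
end

section
/- There exists an Ellentuck basic set N_h all of whose elements code antisymmetric binary relations; consequently, the set of codes of antisymmetric binary relations is not ε-small. -/
open Set

/-- Some Ellentuck basic set consists of codes of antisymmetric relations;
hence the set of codes of antisymmetric relations is not ε-small. -/
theorem antisymmetric_not_epsSmall (q : ℕ ≃ ℕ × ℕ) :
    (∃ h, isEllentuckFn h ∧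
      Nf h ⊆ {z | ∀ a b : ℕ, RelC q z a b → RelC q z b a → a = b}) ∧
    ¬ epsSmall {z | ∀ a b : ℕ, RelC q z a b → RelC q z b a → a = b} := by
  classical
  set h : ℕ → Option Bool := fun n => if (q n).2 < (q n).1 then some false else none with hh
  have hdom : domPF h = {n | (q n).2 < (q n).1} := by
    ext n
    simp only [domPF, hh, Set.mem_setOf_eq]
    by_cases hc : (q n).2 < (q n).1 <;> simp [hc]
  have hE : isEllentuckFn h := by
    refine ⟨⟨?_, ?_⟩, 0, fun n _ hn => ?_⟩
    · rw [hdom]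
      apply Set.infinite_of_injective_forall_mem
        (f := fun k : ℕ => q.symm (k + 1, 0))
      · intro a b hab
        have := q.symm.injective hab
        simpa using this
      · intro k
        simp [Set.mem_setOf_eq]
    · rw [hdom]
      apply Set.infinite_of_injective_forall_mem
        (f := fun k : ℕ => q.symm (0, k))
      · intro a b hab
        have := q.symm.injective hab
        simpa using this
      · intro k
        simp [Set.mem_setOf_eq]
    · rw [hdom, Set.mem_setOf_eq] at hn
      simp [hh, hn]
  have hsub : Nf h ⊆ {z | ∀ a b : ℕ, RelC q z a b → RelC q z b a → a = b} := by
    intro z hz a b hab hba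
    by_contra hne
    rcases Nat.lt_or_ge a b with hlt | hge
    · -- b > a, so h at q.symm (b, a) = some false
      have : h (q.symm (b, a)) = some false := by
        simp [hh, hlt]
      have := hz _ _ this
      rw [RelC] at hba
      rw [hba] at this
      exact Bool.noConfusion this
    · have hlt : b < a := lt_of_le_of_ne hge (Ne.symm hne)
      have : h (q.symm (a, b)) = some false := by
        simp [hh, hlt]
      have := hz _ _ this
      rw [RelC] at hab
      rw [hab] at this
      exact Bool.noConfusion this
  refine ⟨⟨h, hE, hsub⟩, ?_⟩
  intro hsmall
  obtain ⟨g, hgE, hgsub, hgint⟩ := hsmall h hE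
  set x : Cantor := fun n => (g n).getD false with hx
  have hxg : x ∈ Nf g := by
    intro n b hb
    simp [hx, hb]
  have : x ∈ Nf g ∩ {z | ∀ a b : ℕ, RelC q z a b → RelC q z b a → a = b} :=
    ⟨hxg, hsub (hgsub hxg)⟩
  rw [hgint] at this
  exact this
end

section
/- The set of codes of complete binary relations is ε-small: for every Ellentuck basic set N_f there exists an Ellentuck basic set N_g ⊆ N_f disjoint from the set of codes of complete relations. -/
open Set

/-- The set of codes of complete binary relations is ε-small. -/
theorem complete_epsSmall (q : ℕ ≃ ℕ × ℕ) :
    epsSmall {z | ∀ a b : ℕ, RelC q z a b ∨ RelC q z b a} := by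
  rintro f ⟨⟨hdom, hcod⟩, k, hk⟩
  -- the diagonal map is injective, so its range is infinite and unbounded
  have hinj : Function.Injective (fun a : ℕ => q.symm (a, a)) := by
    intro a b hab
    have := congrArg q hab
    simp at this
    exact this
  obtain ⟨m, hm, hmk⟩ :=
    (Set.infinite_range_of_injective hinj).exists_gt k
  obtain ⟨a, ha⟩ := hm
  -- define g by forcing value false at n := q.symm (a,a)
  set n : ℕ := q.symm (a, a) with hn
  have han : n = m := ha
  set g : ℕ → Option Bool := Function.update f n (some false) with hg
  have hdomg : domPF g = insert n (domPF f) := by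
    ext x
    simp only [domPF, Set.mem_setOf_eq, Set.mem_insert_iff, hg]
    by_cases hx : x = n
    · subst hx; simp
    · simp [Function.update_of_ne hx, hx]
  refine ⟨g, ⟨⟨?_, ?_⟩, k, ?_⟩, ?_, ?_⟩
  · rw [hdomg]; exact hdom.mono (Set.subset_insert _ _)
  · rw [hdomg]
    have : (insert n (domPF f))ᶜ = (domPF f)ᶜ \ {n} := by
      ext x; simp [and_comm]
    rw [this]
    exact hcod.diff (Set.finite_singleton n)
  · intro x hx hxd
    by_cases hxn : x = n
    · subst hxn; simp [hg]
    · rw [hg, Function.update_of_ne hxn]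
      apply hk x hx
      rw [hdomg] at hxd
      rcases hxd with h | h
      · exact absurd h hxn
      · exact h
  · intro x hx p b hpb
    by_cases hpn : p = n
    · subst hpn
      have hnd : n ∈ domPF f := by simp [domPF, hpb]
      have hfn : f n = some false := hk n (le_of_lt (han ▸ hmk)) hnd
      have hb : b = false := by rw [hfn] at hpb; injection hpb with h; exact h.symm
      subst hb
      exact hx n false (by simp [hg])
    · exact hx p b (by rwa [hg, Function.update_of_ne hpn])
  · ext x
    simp only [Set.mem_inter_iff, Set.mem_empty_iff_false, iff_false, not_and,
      Set.mem_setOf_eq]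
    intro hxg hcomp
    have hxn : x n = false := hxg n false (by simp [hg])
    rcases hcomp a a with h | h <;>
      · unfold RelC at h
        rw [← hn, hxn] at h
        exact Bool.false_ne_true h
end

section
/- The set of codes of reflexive binary relations is ε-small: for every Ellentuck basic set N_f there exists an Ellentuck basic set N_g ⊆ N_f containing no code of a reflexive relation. -/
open Set

/-- The set of codes of reflexive binary relations is ε-small. -/
theorem reflexive_epsSmall (q : ℕ ≃ ℕ × ℕ) :
    epsSmall {z | ∀ a : ℕ, RelC q z a a} := by
  intro f hf
  obtain ⟨⟨hdom, hcodom⟩, k, hk⟩ := hf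
  -- the diagonal map is injective, so its range is infinite
  have hinj : Function.Injective (fun a : ℕ => q.symm (a, a)) := by
    intro a b hab
    have := congrArg q hab
    simpa using this
  have hrange : (Set.range (fun a : ℕ => q.symm (a, a))).Infinite :=
    Set.infinite_range_of_injective hinj
  obtain ⟨n, ⟨a, ha⟩, hnk⟩ := hrange.exists_gt k
  have hnk' : n ≥ k := le_of_lt hnk
  have hfn : f n ≠ some true := by
    intro h
    have hmem : n ∈ domPF f := by simp [domPF, h]
    have := hk n hnk' hmem
    rw [h] at this
    simp at this
  refine ⟨Function.update f n (some false), ⟨⟨?_, ?_⟩, k, ?_⟩, ?_, ?_⟩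
  · apply Set.Infinite.mono _ hdom
    intro m hm
    by_cases hmn : m = n
    · simp [domPF, Function.update, hmn]
    · simpa [domPF, Function.update, hmn] using hm
  · have : ((domPF f)ᶜ \ {n} : Set ℕ).Infinite := hcodom.diff (Set.finite_singleton n)
    apply Set.Infinite.mono _ this
    intro m hm
    simp only [Set.mem_diff, Set.mem_compl_iff, Set.mem_singleton_iff] at hm
    have := hm.1
    simp only [domPF, Set.mem_setOf_eq, not_not] at this
    simp [domPF, Function.update, hm.2, this]
  · intro m hm hmem
    by_cases hmn : m = n
    · simp [hmn, Function.update]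
    · have : m ∈ domPF f := by simpa [domPF, Function.update, hmn] using hmem
      simpa [Function.update, hmn] using hk m hm this
  · intro x hx m b hmb
    by_cases hmn : m = n
    · subst hmn
      have hb : b = false := by
        cases b
        · rfl
        · exact absurd hmb hfn
      subst hb
      exact hx m false (by simp [Function.update])
    · exact hx m b (by simp [Function.update, hmn, hmb])
  · ext x
    simp only [Set.mem_inter_iff, Set.mem_setOf_eq, Set.mem_empty_iff_false, iff_false]
    rintro ⟨hx, hrefl⟩
    have h1 : x n = false := hx n false (by simp [Function.update])
    have h2 := hrefl a
    have ha' : q.symm (a, a) = n := ha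
    rw [RelC, ha', h1] at h2
    exact absurd h2 (by simp)
end

section
/- The set of codes of complete binary relations contains a doughnut basic set, hence is not δ-small. -/
open Set

/-- The set of codes of complete binary relations contains a doughnut basic
set, hence is not δ-small. -/
theorem complete_not_deltaSmall (q : ℕ ≃ ℕ × ℕ) :
    (∃ f, isDoughnutFn f ∧
      Nf f ⊆ {z | ∀ a b : ℕ, RelC q z a b ∨ RelC q z b a}) ∧
    ¬ deltaSmall {z | ∀ a b : ℕ, RelC q z a b ∨ RelC q z b a} := by

  have key : ∃ f, isDoughnutFn f ∧
      Nf f ⊆ {z | ∀ a b : ℕ, RelC q z a b ∨ RelC q z b a} := by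
    refine ⟨fun n => if (q n).1 ≤ (q n).2 then some true else none, ⟨?_, ?_⟩, ?_⟩
    · apply Set.infinite_of_injective_forall_mem
        (f := fun k : ℕ => q.symm (k, k))
      · intro a b h
        have := congrArg q h
        simp at this
        exact this
      · intro k
        simp [domPF]
    · apply Set.infinite_of_injective_forall_mem
        (f := fun k : ℕ => q.symm (k + 1, k))
      · intro a b h
        have := congrArg q h
        simp at this
        exact this
      · intro k
        simp [domPF]
    · intro z hz a b
      rcases le_total a b with h | h
      · left
        have := hz (q.symm (a, b)) true (by simp [h])
        exact this
      · right
        exact hz (q.symm (b, a)) true (by simp [h])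
  refine ⟨key, ?_⟩
  intro hsmall
  obtain ⟨f, hf, hsub⟩ := key
  obtain ⟨g, hg, hgf, hdisj⟩ := hsmall f hf
  have hx : (fun n => (g n).getD true) ∈ Nf g := by
    intro n b hb
    simp [hb]
  have : (fun n => (g n).getD true) ∈ Nf g ∩ {z | ∀ a b : ℕ, RelC q z a b ∨ RelC q z b a} :=
    ⟨hx, hsub (hgf hx)⟩
  rw [hdisj] at this
  exact this
end

section
/- The set of codes of partial orders is not small in the relative Ellentuck topology induced on the set of codes of quasi-orders: there exists an Ellentuck basic set N_f such that N_f ∩ Q ⊆ P. -/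
open Set

/-- The set of codes of quasi-orders (reflexive and transitive relations). -/
def QSet (q : ℕ ≃ ℕ × ℕ) : Set Cantor :=
  {z | (∀ a : ℕ, RelC q z a a) ∧
    ∀ a b c : ℕ, RelC q z a b → RelC q z b c → RelC q z a c}

/-- The set of codes of partial orders. -/
def POSet (q : ℕ ≃ ℕ × ℕ) : Set Cantor :=
  {z | (∀ a : ℕ, RelC q z a a) ∧
    (∀ a b c : ℕ, RelC q z a b → RelC q z b c → RelC q z a c) ∧
    ∀ a b : ℕ, RelC q z a b → RelC q z b a → a = b}

/-- The set of codes of partial orders is not small in the relative Ellentuck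
topology induced on the set of codes of quasi-orders: some Ellentuck basic set
meets the quasi-orders only in partial orders. -/
theorem partialOrder_not_epsQ_small (q : ℕ ≃ ℕ × ℕ) :
    ∃ f, isEllentuckFn f ∧ Nf f ∩ QSet q ⊆ POSet q := by
  refine ⟨fun n => if (q n).1 < (q n).2 then some false else none, ⟨⟨?_, ?_⟩, 0, ?_⟩, ?_⟩
  · apply Set.infinite_of_injective_forall_mem
      (f := fun n : ℕ => q.symm (0, n + 1))
    · intro a b h
      simpa using (Equiv.injective q.symm h)
    · intro n
      simp [domPF, Equiv.apply_symm_apply]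
  · apply Set.infinite_of_injective_forall_mem
      (f := fun n : ℕ => q.symm (n, n))
    · intro a b h
      simpa using (Equiv.injective q.symm h)
    · intro n
      simp [domPF, Equiv.apply_symm_apply]
  · intro n _ hn
    simp only [domPF, Set.mem_setOf_eq] at hn
    by_cases h : (q n).1 < (q n).2 <;> simp [h] at hn ⊢
  · rintro z ⟨hz, hrefl, htrans⟩
    refine ⟨hrefl, htrans, fun a b hab hba => ?_⟩
    by_contra hne
    rcases Nat.lt_or_ge a b with h | h
    · have := hz (q.symm (a, b)) false (by simp [Equiv.apply_symm_apply, h])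
      rw [RelC] at hab
      simp [this] at hab
    · have h' : b < a := lt_of_le_of_ne h (Ne.symm hne)
      have := hz (q.symm (b, a)) false (by simp [Equiv.apply_symm_apply, h'])
      rw [RelC] at hba
      simp [this] at hba
end

section
/- The set of codes of anonymous binary relations on the utility space contains a doughnut basic set (hence is not δ-small): there exists a partial function f with infinite co-infinite domain, constantly 1, such that every z agreeing with f codes an anonymous relation. -/
open Set

/-- `s ∼ₐ t`: `t` is obtained from `s` by transposing two coordinates. -/
def simA {Y : Type*} {N : ℕ} (s t : Fin N → Y) : Prop :=
  ∃ i j : Fin N, s j = t i ∧ s i = t j ∧ ∀ k : Fin N, k ≠ i → k ≠ j → s k = t k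

private lemma simA_refl {Y : Type*} {N : ℕ} (hN : 0 < N) (s : Fin N → Y) : simA s s :=
  ⟨⟨0, hN⟩, ⟨0, hN⟩, rfl, rfl, fun _ _ _ => rfl⟩

private lemma simA_symm {Y : Type*} {N : ℕ} {s t : Fin N → Y} (h : simA s t) : simA t s := by
  obtain ⟨i, j, h1, h2, h3⟩ := h
  exact ⟨i, j, h2.symm, h1.symm, fun k hk1 hk2 => (h3 k hk1 hk2).symm⟩

private lemma Nf_nonempty (g : ℕ → Option Bool) : (Nf g).Nonempty := by
  refine ⟨fun n => (g n).getD true, ?_⟩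
  intro n b h
  simp [h]

/-- The set of codes of anonymous binary relations on the utility space
contains a doughnut basic set with constant value `1`, hence is not δ-small. -/
theorem anonymous_not_deltaSmall (Y : Type*) [Countable Y] [Infinite Y]
    (N : ℕ) (hN : 2 ≤ N) (q : ℕ ≃ (Fin N → Y) × (Fin N → Y)) :
    (∃ f, isDoughnutFn f ∧ (∀ n : ℕ, f n = some true ∨ f n = none) ∧
      Nf f ⊆ {z | ∀ s t : Fin N → Y, simA s t → RelC q z s t ∧ RelC q z t s}) ∧
    ¬ deltaSmall {z | ∀ s t : Fin N → Y, simA s t → RelC q z s t ∧ RelC q z t s} := by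
  classical
  have hN0 : 0 < N := by omega
  set f : ℕ → Option Bool :=
    fun n => if simA (q n).1 (q n).2 then some true else none with hf
  have hdom : ∀ n, n ∈ domPF f ↔ simA (q n).1 (q n).2 := by
    intro n
    by_cases h : simA (q n).1 (q n).2 <;> simp [domPF, hf, h]
  have e : ℕ ↪ Y := Infinite.natEmbedding Y
  have hdough : isDoughnutFn f := by
    constructor
    · refine Set.infinite_of_injective_forall_mem
        (f := fun m : ℕ => q.symm (Function.const (Fin N) (e m), Function.const (Fin N) (e m)))
        ?_ ?_
      · intro a b hab
        have h1 := q.symm.injective hab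
        have h2 : Function.const (Fin N) (e a) = Function.const (Fin N) (e b) :=
          congrArg Prod.fst h1
        exact e.injective (congrFun h2 ⟨0, hN0⟩)
      · intro m
        rw [hdom, Equiv.apply_symm_apply]
        exact simA_refl hN0 _
    · refine Set.infinite_of_injective_forall_mem
        (f := fun m : ℕ => q.symm (Function.const (Fin N) (e 0), Function.const (Fin N) (e (m+1))))
        ?_ ?_
      · intro a b hab
        have h1 := q.symm.injective hab
        have h2 : Function.const (Fin N) (e (a+1)) = Function.const (Fin N) (e (b+1)) :=
          congrArg Prod.snd h1
        have := e.injective (congrFun h2 ⟨0, hN0⟩)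
        omega
      · intro m
        simp only [Set.mem_compl_iff, hdom, Equiv.apply_symm_apply]
        rintro ⟨i, j, h1, -, -⟩
        have : e 0 = e (m+1) := h1
        have := e.injective this
        omega
  have hsub : Nf f ⊆ {z | ∀ s t : Fin N → Y, simA s t → RelC q z s t ∧ RelC q z t s} := by
    intro z hz s t hst
    have key : ∀ s t : Fin N → Y, simA s t → RelC q z s t := by
      intro s t hst
      have hf1 : f (q.symm (s, t)) = some true := by
        simp only [hf, Equiv.apply_symm_apply]
        exact if_pos hst
      exact hz _ _ hf1
    exact ⟨key s t hst, key t s (simA_symm hst)⟩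
  refine ⟨⟨f, hdough, ?_, hsub⟩, ?_⟩
  · intro n
    by_cases h : simA (q n).1 (q n).2 <;> simp [hf, h]
  · intro hsmall
    obtain ⟨g, -, hg1, hg2⟩ := hsmall f hdough
    obtain ⟨x, hx⟩ := Nf_nonempty g
    have : x ∈ Nf g ∩ {z | ∀ s t : Fin N → Y, simA s t → RelC q z s t ∧ RelC q z t s} :=
      ⟨hx, hsub (hg1 hx)⟩
    rw [hg2] at this
    exact this
end

section
/- The set of codes of Paretian binary relations contains a doughnut basic set, hence is not δ-small. -/
open Set

/-- The Pareto dominance relation on utility streams `Fin N → Y`, `Y ⊆ ℚ`. -/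
def ltPareto {Y : Set ℚ} {N : ℕ} (s t : Fin N → Y) : Prop :=
  (∀ i : Fin N, (s i : ℚ) ≤ (t i : ℚ)) ∧ ∃ i : Fin N, (s i : ℚ) < (t i : ℚ)

lemma ltPareto_asymm {Y : Set ℚ} {N : ℕ} {s t : Fin N → Y} (h : ltPareto s t) :
    ¬ ltPareto t s := by
  rintro ⟨h1, -⟩
  obtain ⟨i, hi⟩ := h.2
  exact absurd (h1 i) (not_le.2 hi)

lemma ltPareto_irrefl {Y : Set ℚ} {N : ℕ} (s : Fin N → Y) : ¬ ltPareto s s := by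
  rintro ⟨-, i, hi⟩; exact lt_irrefl _ hi

open Classical in
noncomputable def fPar {Y : Set ℚ} {N : ℕ} (q : ℕ ≃ (Fin N → Y) × (Fin N → Y)) :
    ℕ → Option Bool := fun n =>
  if ltPareto (q n).1 (q n).2 then some true
  else if ltPareto (q n).2 (q n).1 then some false else none


/-- The set of codes of Paretian binary relations contains a doughnut basic
set, hence is not δ-small. -/
theorem paretian_not_deltaSmall (Y : Set ℚ) (hsub : Y ⊆ Set.Icc 0 1)
    (hc : Y.Countable) (hinf : Y.Infinite) (N : ℕ) (hN : 1 ≤ N)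
    (q : ℕ ≃ (Fin N → Y) × (Fin N → Y)) :
    (∃ f, isDoughnutFn f ∧
      Nf f ⊆ {z | ∀ s t : Fin N → Y, ltPareto s t → RelC q z s t ∧ ¬ RelC q z t s}) ∧
    ¬ deltaSmall {z | ∀ s t : Fin N → Y, ltPareto s t → RelC q z s t ∧ ¬ RelC q z t s} := by
  classical
  set S : Set Cantor :=
    {z | ∀ s t : Fin N → Y, ltPareto s t → RelC q z s t ∧ ¬ RelC q z t s} with hS
  set f := fPar q with hf
  -- constant streams
  have i0 : Fin N := ⟨0, hN⟩
  let cs : Y → (Fin N → Y) := fun y _ => y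
  have cs_inj : Function.Injective cs := fun a b h => congrFun h i0
  have hcs : ∀ (a b : Y), (a : ℚ) < b → ltPareto (cs a) (cs b) := by
    intro a b hab
    exact ⟨fun _ => le_of_lt hab, ⟨i0, hab⟩⟩
  -- membership: Nf f ⊆ S
  have hsubS : Nf f ⊆ S := by
    intro z hz s t hst
    constructor
    · have h1 : f (q.symm (s, t)) = some true := by
        simp only [hf, fPar, Equiv.apply_symm_apply]
        rw [if_pos hst]
      exact hz _ _ h1
    · have h2 : f (q.symm (t, s)) = some false := by
        simp only [hf, fPar, Equiv.apply_symm_apply]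
        rw [if_neg (ltPareto_asymm hst), if_pos hst]
      intro hR
      have := hz _ _ h2
      rw [RelC] at hR
      rw [hR] at this
      exact Bool.true_eq_false.mp this
  -- doughnut
  have hdiag : ∀ y : Y, q.symm (cs y, cs y) ∈ (domPF f)ᶜ := by
    intro y
    simp only [mem_compl_iff, domPF, mem_setOf_eq, not_not, hf, fPar,
      Equiv.apply_symm_apply]
    rw [if_neg (ltPareto_irrefl _), if_neg (ltPareto_irrefl _)]
  haveI : Infinite ↥Y := Set.infinite_coe_iff.mpr hinf
  have hco : ((domPF f)ᶜ : Set ℕ).Infinite := by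
    apply Set.infinite_of_injective_forall_mem
      (f := fun y : Y => q.symm (cs y, cs y))
    · intro a b h
      have := q.symm.injective h
      exact cs_inj (congrArg Prod.fst this)
    · exact hdiag
  -- domain infinite
  have hdom : (domPF f).Infinite := by
    obtain ⟨b, hbY⟩ := hinf.nonempty
    have hsplit : (Y \ {b}).Infinite := hinf.diff (Set.finite_singleton b)
    have : ({y ∈ Y | y < b} ∪ {y ∈ Y | b < y} : Set ℚ).Infinite := by
      apply hsplit.mono
      rintro y ⟨hyY, hyb⟩
      rcases lt_or_gt_of_ne (fun h => hyb h) with h | h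
      · exact Or.inl ⟨hyY, h⟩
      · exact Or.inr ⟨hyY, h⟩
    have hmem : ∀ a c : Y, (a : ℚ) < c → q.symm (cs a, cs c) ∈ domPF f := by
      intro a c h
      simp only [domPF, mem_setOf_eq, hf, fPar, Equiv.apply_symm_apply]
      rw [if_pos (hcs a c h)]
      simp
    rcases Set.infinite_union.mp this with hL | hU
    · haveI : Infinite ↥{y ∈ Y | y < b} := Set.infinite_coe_iff.mpr hL
      apply Set.infinite_of_injective_forall_mem
        (f := fun y : ↥{y ∈ Y | y < b} => q.symm (cs ⟨y.1, y.2.1⟩, cs ⟨b, hbY⟩))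
      · intro a c h
        have h2 := q.symm.injective h
        have h3 := cs_inj (congrArg Prod.fst h2)
        exact Subtype.ext (by simpa [Subtype.ext_iff] using h3)
      · intro y; exact hmem _ _ y.2.2
    · haveI : Infinite ↥{y ∈ Y | b < y} := Set.infinite_coe_iff.mpr hU
      apply Set.infinite_of_injective_forall_mem
        (f := fun y : ↥{y ∈ Y | b < y} => q.symm (cs ⟨b, hbY⟩, cs ⟨y.1, y.2.1⟩))
      · intro a c h
        have h2 := q.symm.injective h
        have h3 := cs_inj (congrArg Prod.snd h2)
        exact Subtype.ext (by simpa [Subtype.ext_iff] using h3)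
      · intro y; exact hmem _ _ y.2.2
  refine ⟨⟨f, ⟨hdom, hco⟩, hsubS⟩, ?_⟩
  intro hds
  obtain ⟨g, hg, hgf, hgS⟩ := hds f ⟨hdom, hco⟩
  have hz : (fun n => (g n).getD true) ∈ Nf g := by
    intro n b hb; simp only [hb, Option.getD_some]
  have : (fun n => (g n).getD true) ∈ Nf g ∩ S := ⟨hz, hsubS (hgf hz)⟩
  rw [hgS] at this
  exact this
end

section
/- The set of codes of Paretian binary relations is ε-small: for every Ellentuck basic set N_f there exists an Ellentuck basic set N_g ⊆ N_f disjoint from the set of codes of Paretian relations. -/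
open Set

/-- The set of codes of Paretian binary relations is ε-small. -/
theorem paretian_epsSmall (Y : Set ℚ) (hsub : Y ⊆ Set.Icc 0 1)
    (hc : Y.Countable) (hinf : Y.Infinite) (N : ℕ) (hN : 1 ≤ N)
    (q : ℕ ≃ (Fin N → Y) × (Fin N → Y)) :
    epsSmall {z | ∀ s t : Fin N → Y, ltPareto s t → RelC q z s t ∧ ¬ RelC q z t s} := by

  classical
  intro f hf
  obtain ⟨⟨hdom, hcodom⟩, k, hk⟩ := hf
  obtain ⟨a, ha⟩ := hinf.nonempty
  haveI : Infinite Y := hinf.to_subtype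
  set aY : Y := ⟨a, ha⟩ with haY
  have hS : {m : ℕ | ltPareto (q m).1 (q m).2}.Infinite := by
    have h1 : ({aY}ᶜ : Set Y).Infinite := (Set.finite_singleton aY).infinite_compl
    have hsplit : ({aY}ᶜ : Set Y) ⊆ {b : Y | (aY:ℚ) < b} ∪ {b : Y | (b:ℚ) < aY} := by
      intro b hb
      rcases lt_or_gt_of_ne (fun h : (b:ℚ) = (aY:ℚ) => hb (Subtype.ext h)) with h | h
      · exact Or.inr h
      · exact Or.inl h
    have i0 : Fin N := ⟨0, hN⟩
    rcases Set.infinite_union.mp (h1.mono hsplit) with h | h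
    · have hinj : Function.Injective (fun b : Y => q.symm (fun _ => aY, fun _ => b)) := by
        intro b b' hbb
        have h2 := q.symm.injective hbb
        have h3 := congrArg (fun p => p.2 i0) h2
        simpa using h3
      refine (h.image hinj.injOn).mono ?_
      rintro m ⟨b, hb, rfl⟩
      simp only [Set.mem_setOf_eq, Equiv.apply_symm_apply]
      exact ⟨fun i => le_of_lt hb, i0, hb⟩
    · have hinj : Function.Injective (fun b : Y => q.symm (fun _ => b, fun _ => aY)) := by
        intro b b' hbb
        have h2 := q.symm.injective hbb
        have h3 := congrArg (fun p => p.1 i0) h2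
        simpa using h3
      refine (h.image hinj.injOn).mono ?_
      rintro m ⟨b, hb, rfl⟩
      simp only [Set.mem_setOf_eq, Equiv.apply_symm_apply]
      exact ⟨fun i => le_of_lt hb, i0, hb⟩
  obtain ⟨m, hmS, hmk⟩ := hS.exists_gt k
  set g : ℕ → Option Bool := fun n => if n = m then some false else f n with hg
  have hsubd : domPF f ⊆ domPF g := by
    intro n hn
    simp only [domPF, Set.mem_setOf_eq, hg] at hn ⊢
    split
    · simp
    · exact hn
  have hNg : ∀ x ∈ Nf g, x m = false := fun x hx => hx m false (by simp [hg])
  refine ⟨g, ⟨⟨hdom.mono hsubd, ?_⟩, k, ?_⟩, ?_, ?_⟩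
  · refine ((hcodom.diff (Set.finite_singleton m)).mono ?_)
    rintro n ⟨hn, hnm⟩
    simp only [domPF, Set.mem_setOf_eq, Set.mem_singleton_iff] at hn hnm ⊢
    simpa [hg, hnm] using hn
  · intro n hn hnd
    simp only [domPF, Set.mem_setOf_eq, hg] at hnd ⊢
    by_cases hnm : n = m
    · simp [hnm]
    · rw [if_neg hnm] at hnd ⊢
      exact hk n hn hnd
  · intro x hx n b hfn
    by_cases hnm : n = m
    · subst hnm
      have hdm : n ∈ domPF f := by simp [domPF, hfn]
      have := hk n (le_of_lt hmk) hdm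
      rw [this] at hfn
      cases hfn
      exact hNg x hx
    · exact hx n b (by simp [hg, if_neg hnm, hfn])
  · apply Set.eq_empty_iff_forall_notMem.mpr
    rintro x ⟨hx1, hx2⟩
    have h1 : x m = false := hNg x hx1
    have h2 := (hx2 (q m).1 (q m).2 hmS).1
    unfold RelC at h2
    rw [Prod.mk.eta, Equiv.symm_apply_apply] at h2
    rw [h1] at h2
    exact Bool.false_ne_true h2
end
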